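/- arXiv:1709.04143 — 7 statements merged into one kernel-verified Lean document; each statement's English description precedes it below -/
import Mathlib

section
/- Let β be an algebraic number with minimal polynomial m(x) = a_d x^d + ... + a_1 x + a_0 ∈ ℤ[x], and let n be a positive integer. If gcd(a_d, n) = 1 and gcd(a_0, n) = 1, then there exists a positive integer i such that β^i - 1 ∈ nℤ[β]. -/
/-!
Work in `A = ℤ[X] ⧸ (n, m)` and let `x` be the class of `X`. Since `a_d` is invertible modulo `n`,
`x` is integral over `ℤ`, so `A` is a finitely generated abelian group killed by `n`, hence finite.
Since `a_0` is invertible modulo `n`, `x` is a unit, so `x ^ i = 1` for some `i > 0`. This says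
`X ^ i - 1 = n a + m b` in `ℤ[X]`, and evaluating at `β` gives `β ^ i - 1 = n a(β)`.
-/

/-- `m` is the (primitive) minimal polynomial of `β` over `ℤ`. -/
def IsMinPolyZ (β : ℂ) (m : Polynomial ℤ) : Prop :=
  m ≠ 0 ∧ m.IsPrimitive ∧ 0 < m.leadingCoeff ∧ Polynomial.aeval β m = 0 ∧
    ∀ q : Polynomial ℤ, q ≠ 0 → Polynomial.aeval β q = 0 → m.natDegree ≤ q.natDegree

open Polynomial

theorem isUnit_of_aeval_eq_zero {R A : Type*} [CommRing R] [CommRing A] [Algebra R A]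
    {p : R[X]} {x : A} (hp : aeval x p = 0) (h0 : IsUnit (algebraMap R A (p.coeff 0))) :
    IsUnit x := by
  obtain ⟨q, hq⟩ := X_dvd_sub_C (p := p)
  have hxq : x * aeval x q = -algebraMap R A (p.coeff 0) := by
    simpa [hp] using (congrArg (aeval x) hq).symm
  exact isUnit_of_mul_isUnit_left (hxq ▸ h0.neg)

theorem isIntegral_of_aeval_eq_zero_of_mul_leadingCoeff_eq_one {R A : Type*} [CommRing R]
    [CommRing A] [Algebra R A] {p : R[X]} {x : A} (hp : aeval x p = 0) {u : R}
    (hu : algebraMap R A (u * p.leadingCoeff) = 1) : IsIntegral R x := by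
  have hx : x = u • p.leadingCoeff • x := by
    rw [smul_smul, Algebra.smul_def, hu, one_mul]
  exact hx ▸ (isIntegral_leadingCoeff_smul p x hp).smul u

theorem exists_intCast_mul_eq_one_of_gcd_eq_one {A : Type*} [CommRing A] {n : ℕ}
    (hn : (n : A) = 0) {a : ℤ} (ha : Int.gcd a n = 1) : ∃ u : ℤ, ((u * a : ℤ) : A) = 1 := by
  obtain ⟨u, v, huv⟩ := Int.isCoprime_iff_gcd_eq_one.mpr ha
  refine ⟨u, ?_⟩
  rw [show u * a = 1 - v * n by linarith]
  push_cast
  rw [hn, mul_zero, sub_zero]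

theorem finite_of_natCast_eq_zero {A : Type*} [CommRing A] [Module.Finite ℤ A] {n : ℕ}
    (hn : n ≠ 0) (hnA : (n : A) = 0) : Finite A :=
  Module.finite_of_fg_torsion A fun y =>
    ⟨⟨n, mem_nonZeroDivisors_of_ne_zero (by exact_mod_cast hn)⟩, by
      simp [zsmul_eq_mul, hnA]⟩

theorem exists_pow_eq_one_of_isUnit {M : Type*} [Monoid M] [Finite M] {x : M} (hx : IsUnit x) :
    ∃ i, 0 < i ∧ x ^ i = 1 :=
  (isOfFinOrder_iff_isUnit.mpr hx).exists_pow_eq_one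

theorem exists_pow_eq_one_of_adjoin_eq_top {A : Type*} [CommRing A] {n : ℕ} (hn : n ≠ 0)
    (hnA : (n : A) = 0) {x : A} (hgen : Algebra.adjoin ℤ {x} = ⊤) {p : ℤ[X]}
    (hp : aeval x p = 0) (hlead : Int.gcd p.leadingCoeff n = 1)
    (hconst : Int.gcd (p.coeff 0) n = 1) : ∃ i, 0 < i ∧ x ^ i = 1 := by
  obtain ⟨u, hu⟩ := exists_intCast_mul_eq_one_of_gcd_eq_one hnA hlead
  have hint : IsIntegral ℤ x :=
    isIntegral_of_aeval_eq_zero_of_mul_leadingCoeff_eq_one hp (by simpa using hu)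
  have : Module.Finite ℤ A := by
    have hfg := hint.fg_adjoin_singleton
    rw [hgen, Algebra.top_toSubmodule] at hfg
    exact ⟨hfg⟩
  have : Finite A := finite_of_natCast_eq_zero hn hnA
  obtain ⟨s, hs⟩ := exists_intCast_mul_eq_one_of_gcd_eq_one hnA hconst
  have hx : IsUnit x := isUnit_of_aeval_eq_zero hp
    (.of_mul_eq_one_right _ (by simpa using hs))
  exact exists_pow_eq_one_of_isUnit hx

theorem exists_X_pow_sub_one_mem_span {n : ℕ} (hn : n ≠ 0) {p : ℤ[X]}
    (hlead : Int.gcd p.leadingCoeff n = 1) (hconst : Int.gcd (p.coeff 0) n = 1) :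
    ∃ i, 0 < i ∧ (X ^ i - 1 : ℤ[X]) ∈ Ideal.span {C (n : ℤ), p} := by
  set π := Ideal.Quotient.mkₐ ℤ (Ideal.span {C (n : ℤ), p})
  have hnπ : (n : ℤ[X] ⧸ Ideal.span {C (n : ℤ), p}) = 0 := by
    simpa using Ideal.Quotient.eq_zero_iff_mem.mpr (Ideal.subset_span (by simp) :
      C (n : ℤ) ∈ Ideal.span {C (n : ℤ), p})
  have hpπ : aeval (π X) p = 0 := by
    rw [aeval_algHom_apply, aeval_X_left_apply]
    exact Ideal.Quotient.eq_zero_iff_mem.mpr (Ideal.subset_span (by simp))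
  have hgen : Algebra.adjoin ℤ {π X} = ⊤ := by
    rw [← Set.image_singleton, ← AlgHom.map_adjoin, adjoin_X, Algebra.map_top,
      AlgHom.range_eq_top]
    exact Ideal.Quotient.mkₐ_surjective ℤ _
  obtain ⟨i, hi, hXi⟩ := exists_pow_eq_one_of_adjoin_eq_top hn hnπ hgen hpπ hlead hconst
  refine ⟨i, hi, Ideal.Quotient.eq_zero_iff_mem.mp ?_⟩
  simpa [π, sub_eq_zero] using hXi

theorem stmt_0 (β : ℂ) (m : Polynomial ℤ) (hm : IsMinPolyZ β m) (n : ℕ) (hn : 0 < n)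
    (hlead : Int.gcd m.leadingCoeff n = 1) (hconst : Int.gcd (m.coeff 0) n = 1) :
    ∃ i : ℕ, 0 < i ∧ ∃ z ∈ Algebra.adjoin ℤ {β}, β ^ i - 1 = (n : ℂ) * z := by
  obtain ⟨-, -, -, hβ, -⟩ := hm
  obtain ⟨i, hi, hmem⟩ := exists_X_pow_sub_one_mem_span hn.ne' hlead hconst
  obtain ⟨a, b, hab⟩ := Ideal.mem_span_pair.mp hmem
  refine ⟨i, hi, aeval β a, Algebra.adjoin_singleton_eq_range_aeval ℤ β ▸ ⟨a, rfl⟩, ?_⟩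
  have := congrArg (aeval β) hab
  simp only [map_add, map_mul, map_sub, map_pow, map_one, aeval_X, aeval_C, hβ] at this
  simpa [mul_comm] using this.symm
end

section
/- Let β be an algebraic number of degree d. Then for every positive integer n there exist integers i > j such that β^i - β^j ∈ nℤ[β]. -/
/-!
β is a root of a primitive integer polynomial `f`, whose reduction mod any prime `p` is nonzero.
Hence `ℤ[β]/pℤ[β]` is generated over `𝔽_p` by a root of a nonzero polynomial, so it is a
finite-dimensional `𝔽_p`-algebra and thus finite. Since every class mod `ab` has the form
`u + a v` with `u` taken mod `a` and `v` mod `b`, finiteness passes to `ℤ[β]/nℤ[β]` for all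
`n > 0`, and the pigeonhole principle among the powers of `β` gives `β^i ≡ β^j (mod n)`.
-/

open Polynomial

namespace Ideal

variable {R : Type*} [CommRing R]

theorem exists_pow_sub_pow_mem_of_finite_quotient (I : Ideal R) [Finite (R ⧸ I)] (x : R) :
    ∃ i j : ℕ, j < i ∧ x ^ i - x ^ j ∈ I := by
  obtain ⟨k, l, hkl, h⟩ :=
    Finite.exists_ne_map_eq_of_infinite fun k : ℕ ↦ Ideal.Quotient.mk I (x ^ k)
  rcases hkl.lt_or_gt with hlt | hlt
  · exact ⟨l, k, hlt, Ideal.Quotient.eq.mp h.symm⟩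
  · exact ⟨k, l, hlt, Ideal.Quotient.eq.mp h⟩

theorem finite_quotient_span_mul {a b : R}
    (ha : Finite (R ⧸ span {a})) (hb : Finite (R ⧸ span {b})) :
    Finite (R ⧸ span {a * b}) := by
  refine Finite.of_surjective
    (fun uv : (R ⧸ span {a}) × (R ⧸ span {b}) ↦
      Ideal.Quotient.mk (span {a * b}) (uv.1.out + a * uv.2.out)) ?_
  intro r
  induction r using Quotient.inductionOn' with | h r => ?_
  obtain ⟨t, ht⟩ := mem_span_singleton'.mp
    (Ideal.Quotient.eq.mp (Ideal.Quotient.mk_out (Ideal.Quotient.mk (span {a}) r)))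
  obtain ⟨s, hs⟩ := mem_span_singleton'.mp
    (Ideal.Quotient.eq.mp (Ideal.Quotient.mk_out (Ideal.Quotient.mk (span {b}) (-t))))
  refine ⟨(Ideal.Quotient.mk _ r, Ideal.Quotient.mk _ (-t)), Ideal.Quotient.eq.mpr ?_⟩
  refine mem_span_singleton'.mpr ⟨s, ?_⟩
  linear_combination ht + a * hs

theorem finite_quotient_span_natCast_of_prime
    (hprime : ∀ p : ℕ, p.Prime → Finite (R ⧸ span {(p : R)})) {n : ℕ} (hn : n ≠ 0) :
    Finite (R ⧸ span {(n : R)}) := by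
  induction n using Nat.recOnMul with
  | zero => exact absurd rfl hn
  | one =>
    rw [Nat.cast_one, span_singleton_one]
    infer_instance
  | prime p hp => exact hprime p hp
  | mul a b ha hb =>
    rw [Nat.cast_mul]
    exact finite_quotient_span_mul (ha (left_ne_zero_of_mul hn)) (hb (right_ne_zero_of_mul hn))

end Ideal

theorem Polynomial.IsPrimitive.map_intCastRingHom_ne_zero {f : ℤ[X]} (hf : f.IsPrimitive)
    {p : ℕ} (hp : p.Prime) : f.map (Int.castRingHom (ZMod p)) ≠ 0 := by
  intro h
  have hpf : C (p : ℤ) ∣ f := (C_dvd_iff_dvd_coeff _ _).mpr fun i ↦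
    (ZMod.intCast_zmod_eq_zero_iff_dvd _ _).mp (by simpa using congrArg (coeff · i) h)
  exact (Nat.prime_iff_prime_int.mp hp).not_isUnit (hf _ hpf)

theorem Algebra.aeval_adjoin_singleton_surjective {R A : Type*} [CommSemiring R] [CommSemiring A]
    [Algebra R A] (x : A) :
    Function.Surjective (aeval (R := R) (⟨x, self_mem_adjoin_singleton R x⟩ : adjoin R {x})) := by
  rintro ⟨y, hy⟩
  rw [adjoin_singleton_eq_range_aeval] at hy
  obtain ⟨g, rfl⟩ := hy
  exact ⟨g, Subtype.ext (aeval_subalgebra_coe g _ _)⟩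

theorem Ideal.finite_quotient_span_prime_of_aeval_eq_zero {A : Type*} [CommRing A] {x : A}
    (hx : Function.Surjective (aeval x : ℤ[X] →ₐ[ℤ] A)) {f : ℤ[X]} (hf : aeval x f = 0)
    {p : ℕ} [Fact p.Prime] (hfp : f.map (Int.castRingHom (ZMod p)) ≠ 0) :
    Finite (A ⧸ Ideal.span {(p : A)}) := by
  by_cases hunit : IsUnit (p : A)
  · rw [Ideal.span_singleton_eq_top.mpr hunit]
    infer_instance
  have := CharP.quotient A p hunit
  let := ZMod.algebra (A ⧸ Ideal.span {(p : A)}) p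
  have hy : aeval (Ideal.Quotient.mk (Ideal.span {(p : A)}) x) f = 0 := by
    rw [← Ideal.Quotient.mkₐ_eq_mk ℤ, aeval_algHom_apply, hf, map_zero]
  set y := Ideal.Quotient.mk (Ideal.span {(p : A)}) x
  have hyint : IsIntegral (ZMod p) y :=
    IsAlgebraic.isIntegral ⟨_, hfp, by rw [← algebraMap_int_eq, aeval_map_algebraMap, hy]⟩
  have := Algebra.finite_adjoin_simple_of_isIntegral hyint
  have := Module.finite_of_finite (ZMod p) (M := Algebra.adjoin (ZMod p) {y})
  refine Finite.of_surjective (Subtype.val : Algebra.adjoin (ZMod p) {y} → _) ?_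
  intro b
  obtain ⟨a, rfl⟩ := Ideal.Quotient.mk_surjective b
  obtain ⟨g, rfl⟩ := hx a
  refine ⟨⟨_, ?_⟩, rfl⟩
  rw [← Ideal.Quotient.mkₐ_eq_mk ℤ, ← aeval_algHom_apply, ← aeval_map_algebraMap (ZMod p)]
  exact aeval_mem_adjoin_singleton _ _

theorem stmt_1 (β : ℂ) (hβ : IsAlgebraic ℚ β) (n : ℕ) (hn : 0 < n) :
    ∃ i j : ℤ, j < i ∧ ∃ z ∈ Algebra.adjoin ℤ {β}, β ^ i - β ^ j = (n : ℂ) * z := by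
  obtain ⟨f, hf0, hfβ⟩ := (IsFractionRing.isAlgebraic_iff ℤ ℚ ℂ).mpr hβ
  let x : Algebra.adjoin ℤ {β} := ⟨β, Algebra.self_mem_adjoin_singleton ℤ β⟩
  have hfx : aeval x f.primPart = 0 :=
    Subtype.ext (by rw [aeval_subalgebra_coe]; exact aeval_primPart_eq_zero hf0 hfβ)
  have hfin : Finite (Algebra.adjoin ℤ {β} ⧸ Ideal.span {(n : Algebra.adjoin ℤ {β})}) :=
    Ideal.finite_quotient_span_natCast_of_prime (fun p hp ↦
      have := Fact.mk hp
      Ideal.finite_quotient_span_prime_of_aeval_eq_zero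
        (Algebra.aeval_adjoin_singleton_surjective β) hfx
        (f.isPrimitive_primPart.map_intCastRingHom_ne_zero hp)) hn.ne'
  obtain ⟨i, j, hji, hmem⟩ :=
    Ideal.exists_pow_sub_pow_mem_of_finite_quotient (Ideal.span {(n : Algebra.adjoin ℤ {β})}) x
  obtain ⟨z, hz⟩ := Ideal.mem_span_singleton'.mp hmem
  refine ⟨i, j, by exact_mod_cast hji, z, z.2, ?_⟩
  rw [zpow_natCast, zpow_natCast, mul_comm]
  simpa using (congrArg Subtype.val hz).symm
end

section
/- Let β be a complex number with |β| > 1, let n be a positive integer, and suppose 1/n = Σ_{k ≥ -L} a_k β^{-k} where the digit sequence (a_k) is eventually periodic with values in ℤ[β]. Then there exist integers i > j such that β^i - β^j ∈ nℤ[β]. -/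
/-! Multiplying the expansion of `1/n` by `β ^ p` shifts the digits by the period `p`, so
`(β ^ p - 1) / n` is a finite sum `∑ (a (k + p) - a k) β ^ (-k)` over `-L - p ≤ k ≤ N`. Scaling by
`n β ^ N` clears both the denominator and the negative powers of `β`, which gives
`β ^ (N + p) - β ^ N ∈ n ℤ[β]`. -/

section ShiftedSeries

variable {K : Type*} [Field K] [TopologicalSpace K] [IsTopologicalRing K] [T2Space K]

theorem tsum_shift_mul_zpow_neg {β : K} (hβ : β ≠ 0) (a : ℤ → K) (p : ℤ) :
    ∑' k : ℤ, a (k + p) * β ^ (-k) = β ^ p * ∑' k : ℤ, a k * β ^ (-k) := by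
  rw [← tsum_mul_left, ← (Equiv.addRight p).tsum_eq (fun k => β ^ p * (a k * β ^ (-k)))]
  refine tsum_congr fun k => ?_
  simp only [Equiv.coe_addRight, neg_add, zpow_add₀ hβ, zpow_neg]
  field_simp

theorem zpow_mul_tsum_sub_tsum_eq_sum {β : K} (hβ : β ≠ 0) {a : ℤ → K} {L N : ℤ} {p : ℕ}
    (hzero : ∀ k : ℤ, k < -L → a k = 0) (hper : ∀ k : ℤ, N ≤ k → a (k + p) = a k)
    (hsum : Summable fun k : ℤ => a k * β ^ (-k)) :
    β ^ (p : ℤ) * ∑' k : ℤ, a k * β ^ (-k) - ∑' k : ℤ, a k * β ^ (-k) =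
      ∑ k ∈ Finset.Icc (-L - p) N, (a (k + p) - a k) * β ^ (-k) := by
  set g : ℤ → K := fun k => (a (k + p) - a k) * β ^ (-k)
  have hg : ∀ k ∉ Finset.Icc (-L - p) N, g k = 0 := by
    intro k hk
    rcases lt_or_ge N k with hNk | _
    · simp [g, hper k hNk.le]
    · have hk : k < -L - p := by
        rw [Finset.mem_Icc, not_and_or, not_le, not_le] at hk
        omega
      simp [g, hzero k (by omega), hzero (k + p) (by omega)]
  rw [← tsum_eq_sum (L := SummationFilter.unconditional ℤ) hg, ← tsum_shift_mul_zpow_neg hβ,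
    sub_eq_iff_eq_add', ← hsum.tsum_add (summable_of_ne_finset_zero hg)]
  exact tsum_congr fun k => by ring

end ShiftedSeries

theorem zpow_mul_sum_mem_adjoin {R A : Type*} [CommSemiring R] [Field A] [Algebra R A] {β : A}
    (hβ : β ≠ 0) {s : Finset ℤ} {N : ℤ} (hs : ∀ k ∈ s, k ≤ N) {c : ℤ → A}
    (hc : ∀ k ∈ s, c k ∈ Algebra.adjoin R {β}) :
    β ^ N * ∑ k ∈ s, c k * β ^ (-k) ∈ Algebra.adjoin R {β} := by
  rw [Finset.mul_sum]
  refine Subalgebra.sum_mem _ fun k hk => ?_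
  obtain ⟨m, hm⟩ := Int.eq_ofNat_of_zero_le (sub_nonneg.2 (hs k hk))
  have hpow : β ^ N * β ^ (-k) = β ^ m := by
    rw [← zpow_add₀ hβ, ← sub_eq_add_neg, hm, zpow_natCast]
  rw [mul_left_comm, hpow]
  exact mul_mem (hc k hk) (pow_mem (Algebra.self_mem_adjoin_singleton R β) m)

theorem stmt_7 (β : ℂ) (hβ : 1 < ‖β‖) (n : ℕ) (hn : 0 < n)
    (L : ℤ) (a : ℤ → ℂ) (ha : ∀ k, a k ∈ Algebra.adjoin ℤ {β})
    (hzero : ∀ k : ℤ, k < -L → a k = 0)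
    (hper : ∃ (N : ℤ) (p : ℕ), 0 < p ∧ ∀ k : ℤ, N ≤ k → a (k + p) = a k)
    (hsum : (1 : ℂ) / n = ∑' k : ℤ, a k * β ^ (-k)) :
    ∃ i j : ℤ, j < i ∧ ∃ z ∈ Algebra.adjoin ℤ {β}, β ^ i - β ^ j = (n : ℂ) * z := by
  obtain ⟨N, p, hp, hperiod⟩ := hper
  have hβ0 : β ≠ 0 := norm_pos_iff.mp (one_pos.trans hβ)
  have hn0 : (n : ℂ) ≠ 0 := by exact_mod_cast hn.ne'
  have hsummable : Summable fun k : ℤ => a k * β ^ (-k) := by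
    by_contra h
    rw [tsum_eq_zero_of_not_summable h] at hsum
    exact one_div_ne_zero hn0 hsum
  have hdiff := zpow_mul_tsum_sub_tsum_eq_sum hβ0 hzero hperiod hsummable
  rw [← hsum] at hdiff
  refine ⟨N + p, N, by omega, β ^ N * (β ^ (p : ℤ) * (1 / n) - 1 / n), ?_, ?_⟩
  · rw [hdiff]
    exact zpow_mul_sum_mem_adjoin hβ0 (fun k hk => (Finset.mem_Icc.1 hk).2)
      fun k _ => sub_mem (ha _) (ha _)
  · rw [zpow_add₀ hβ0]
    field_simp
end

section
/- Let β be an algebraic number with minimal polynomial m(x) over ℤ of degree d, and let M be the maximum absolute value of the coefficients of m. Then for every positive integer n there exist integers i > j and integers d_0, ..., d_m with |d_k| < M(d+1) for all k, and m < 2(i - j), such that β^i - β^j = n·Σ_{k=0}^m d_k β^k. -/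
open Polynomial

theorem geom_sum_pow_mul_pow_add_sub_pow {R : Type*} [CommRing R] (x : R) (j g k : ℕ) :
    (∑ i ∈ Finset.range k, x ^ (g * i)) * (x ^ (j + g) - x ^ j) = x ^ (j + g * k) - x ^ j := by
  have h := geom_sum_mul (x ^ g) k
  simp only [← pow_mul] at h
  linear_combination x ^ j * h

namespace Polynomial

theorem C_dvd_iff_map_zmod_eq_zero (n : ℕ) (f : ℤ[X]) :
    C (n : ℤ) ∣ f ↔ f.map (Int.castRingHom (ZMod n)) = 0 := by
  rw [C_dvd_iff_dvd_coeff]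
  simp [Polynomial.ext_iff, ZMod.intCast_zmod_eq_zero_iff_dvd]

theorem exists_monic_mem_span_C_mul {R : Type*} [CommRing R] {f : R[X]} {a b : R}
    (ha : ∃ F ∈ Ideal.span {f, C a}, F.Monic) (hb : ∃ F ∈ Ideal.span {f, C b}, F.Monic) :
    ∃ F ∈ Ideal.span {f, C (a * b)}, F.Monic := by
  obtain ⟨F₁, hF₁, hF₁m⟩ := ha
  obtain ⟨F₂, hF₂, hF₂m⟩ := hb
  obtain ⟨c₁, d₁, rfl⟩ := Ideal.mem_span_pair.mp hF₁
  obtain ⟨c₂, d₂, rfl⟩ := Ideal.mem_span_pair.mp hF₂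
  refine ⟨_, Ideal.mem_span_pair.mpr
    ⟨c₁ * (c₂ * f + d₂ * C b) + d₁ * C a * c₂, d₁ * d₂, ?_⟩, hF₁m.mul hF₂m⟩
  rw [C_mul]
  ring

theorem IsPrimitive.exists_monic_mem_span_C_prime {m : ℤ[X]} (hm : m.IsPrimitive) {p : ℕ}
    (hp : p.Prime) : ∃ F ∈ Ideal.span {m, C (p : ℤ)}, F.Monic := by
  have : Fact p.Prime := ⟨hp⟩
  set m' := m.map (Int.castRingHom (ZMod p))
  have hm' : m' ≠ 0 := fun h =>
    (Nat.prime_iff_prime_int.mp hp).not_isUnit (hm _ ((C_dvd_iff_map_zmod_eq_zero p m).mpr h))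
  obtain ⟨F, hFmap, -, hF⟩ := lifts_and_degree_eq_and_monic
    (mem_lifts_of_surjective (f := Int.castRingHom (ZMod p)) ZMod.intCast_surjective _)
    (monic_mul_leadingCoeff_inv hm')
  obtain ⟨u, hu⟩ := ZMod.intCast_surjective (m'.leadingCoeff)⁻¹
  obtain ⟨w, hw⟩ : C (p : ℤ) ∣ F - m * C u := by
    rw [C_dvd_iff_map_zmod_eq_zero, Polynomial.map_sub, hFmap, Polynomial.map_mul, map_C]
    simp [m', hu]
  exact ⟨F, Ideal.mem_span_pair.mpr ⟨C u, w, by linear_combination -hw⟩, hF⟩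

theorem IsPrimitive.exists_monic_mem_span_C {m : ℤ[X]} (hm : m.IsPrimitive) {n : ℕ}
    (hn : 0 < n) : ∃ F ∈ Ideal.span {m, C (n : ℤ)}, F.Monic := by
  induction n using induction_on_primes with
  | zero => exact absurd hn (lt_irrefl 0)
  | one => exact ⟨1, Ideal.subset_span (by simp), monic_one⟩
  | prime_mul p a hp ih =>
    push_cast
    exact exists_monic_mem_span_C_mul (hm.exists_monic_mem_span_C_prime hp)
      (ih (Nat.pos_of_mul_pos_left hn))

theorem exists_X_pow_add_sub_X_pow_mem {I : Ideal ℤ[X]} {F : ℤ[X]} (hF : F.Monic)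
    (hFI : F ∈ I) {n : ℕ} (hn : 0 < n) (hnI : C (n : ℤ) ∈ I) :
    ∃ j g : ℕ, 0 < g ∧ (X : ℤ[X]) ^ (j + g) - X ^ j ∈ I := by
  have : NeZero n := ⟨hn.ne'⟩
  -- `X ^ t` is determined modulo `I` by the residues mod `n` of the coefficients of `X ^ t %ₘ F`.
  let residues (t : ℕ) : Fin F.natDegree → ZMod n := fun k => ((X ^ t %ₘ F).coeff k : ℤ)
  have key {a b : ℕ} (h : residues a = residues b) : (X : ℤ[X]) ^ a - X ^ b ∈ I := by
    obtain ⟨w, hw⟩ : C (n : ℤ) ∣ X ^ a %ₘ F - X ^ b %ₘ F := by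
      rw [C_dvd_iff_map_zmod_eq_zero]
      ext k
      rw [coeff_map, coeff_sub, coeff_zero]
      by_cases hk : k < F.natDegree
      · simpa [sub_eq_zero] using congrFun h ⟨k, hk⟩
      · have hdeg (t : ℕ) : (X ^ t %ₘ F).coeff k = 0 := coeff_eq_zero_of_degree_lt <|
          (degree_modByMonic_lt _ hF).trans_le
            (degree_le_natDegree.trans (by exact_mod_cast not_lt.mp hk))
        simp [hdeg]
    have hsplit : (X : ℤ[X]) ^ a - X ^ b = F * (X ^ a /ₘ F - X ^ b /ₘ F) + C (n : ℤ) * w := by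
      linear_combination hw - modByMonic_add_div (X ^ a) F + modByMonic_add_div (X ^ b) F
    rw [hsplit]
    exact I.add_mem (I.mul_mem_right _ hFI) (I.mul_mem_right _ hnI)
  obtain ⟨a, b, hab, h⟩ := Finite.exists_ne_map_eq_of_infinite residues
  rcases lt_or_gt_of_ne hab with hab | hab
  · exact ⟨a, b - a, by omega, by rw [Nat.add_sub_cancel' hab.le]; exact key h.symm⟩
  · exact ⟨b, a - b, by omega, by rw [Nat.add_sub_cancel' hab.le]; exact key h⟩

theorem IsPrimitive.exists_X_pow_add_sub_X_pow_sub_mul_dvd {m : ℤ[X]} (hm : m.IsPrimitive)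
    {n : ℕ} (hn : 0 < n) (N : ℕ) :
    ∃ (j l : ℕ) (q : ℤ[X]), j < l ∧ q.natDegree + N < 2 * l ∧
      C (n : ℤ) ∣ X ^ (j + l) - X ^ j - q * m := by
  obtain ⟨F, hFI, hF⟩ := hm.exists_monic_mem_span_C hn
  obtain ⟨j, g, hg, hjg⟩ :=
    exists_X_pow_add_sub_X_pow_mem hF hFI hn (Ideal.subset_span (by simp))
  obtain ⟨q, w, hqw⟩ := Ideal.mem_span_pair.mp hjg
  -- stretching the gap `g` to `g * k` multiplies the cofactors by a geometric sum
  set k := j + q.natDegree + N + 1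
  set S : ℤ[X] := ∑ i ∈ Finset.range k, X ^ (g * i)
  have hS : S.natDegree ≤ g * k := natDegree_sum_le_of_forall_le _ _ fun i hi =>
    (natDegree_X_pow _).trans_le (Nat.mul_le_mul_left _ (Finset.mem_range.mp hi).le)
  have hk : k ≤ g * k := Nat.le_mul_of_pos_left k hg
  refine ⟨j, g * k, S * q, by omega, ?_, S * w, ?_⟩
  · have := natDegree_mul_le (p := S) (q := q)
    omega
  · rw [← geom_sum_pow_mul_pow_add_sub_pow, ← hqw]
    ring

theorem abs_coeff_mul_le {R : Type*} [CommRing R] [LinearOrder R] [IsStrictOrderedRing R]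
    {a b : R[X]} {A B : R} (ha : ∀ t, |a.coeff t| ≤ A) (hb : ∀ t, |b.coeff t| ≤ B) (t : ℕ) :
    |(a * b).coeff t| ≤ (b.natDegree + 1) * (A * B) := by
  have hA : 0 ≤ A := (abs_nonneg _).trans (ha 0)
  have hcoeff : (a * b).coeff t =
      ∑ i ∈ Finset.range (b.natDegree + 1), b.coeff i * (X ^ i * a).coeff t := by
    conv_lhs => rw [b.as_sum_range_C_mul_X_pow, Finset.mul_sum]
    simp only [finsetSum_coeff, ← coeff_C_mul]
    congr! 2 with i
    ring
  rw [hcoeff]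
  refine (Finset.abs_sum_le_sum_abs _ _).trans ?_
  refine (Finset.sum_le_card_nsmul _ _ (A * B) fun i _ => ?_).trans (by simp)
  rw [abs_mul, mul_comm A]
  refine mul_le_mul (hb i) ?_ (abs_nonneg _) ((abs_nonneg _).trans (hb i))
  rw [coeff_X_pow_mul']
  split_ifs
  · exact ha _
  · simpa using hA

theorem exists_coeff_eq_emod (q : ℤ[X]) (n : ℤ) :
    ∃ r : ℤ[X], C n ∣ q - r ∧ ∀ t, r.coeff t = q.coeff t % n := by
  set r := ∑ i ∈ Finset.range (q.natDegree + 1), monomial i (q.coeff i % n)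
  have hr : ∀ t, r.coeff t = q.coeff t % n := by
    intro t
    simp only [r, finsetSum_coeff, coeff_monomial, Finset.sum_ite_eq', Finset.mem_range]
    split_ifs with ht
    · rfl
    · simp [coeff_eq_zero_of_natDegree_lt (Nat.lt_of_succ_le (not_lt.mp ht))]
  refine ⟨r, (C_dvd_iff_dvd_coeff _ _).mpr fun t => ?_, hr⟩
  rw [coeff_sub, hr, Int.emod_def, sub_sub_cancel]
  exact dvd_mul_right _ _

theorem exists_dvd_sub_C_mul_abs_coeff_lt {m f q : ℤ[X]} {n : ℕ} {M : ℤ} (hn : 0 < n)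
    (hm : ∀ t, |m.coeff t| ≤ M) (hM : 1 < M * (m.natDegree + 1)) (hf : ∀ t, |f.coeff t| ≤ 1)
    (hfq : C (n : ℤ) ∣ f - q * m) :
    ∃ p : ℤ[X], m ∣ f - C (n : ℤ) * p ∧ (∀ t, |p.coeff t| < M * (m.natDegree + 1)) ∧
      p.natDegree ≤ max f.natDegree (q.natDegree + m.natDegree) := by
  have hn' : (0 : ℤ) < n := by exact_mod_cast hn
  obtain ⟨r, hqr, hr⟩ := exists_coeff_eq_emod q n
  obtain ⟨p, hp⟩ : C (n : ℤ) ∣ f - r * m := by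
    convert dvd_add hfq (hqr.mul_right m) using 1
    ring
  have hcoeff : ∀ t, n * p.coeff t = f.coeff t - (r * m).coeff t := by
    intro t
    simpa [coeff_C_mul] using (congrArg (coeff · t) hp).symm
  have hr_abs : ∀ t, |r.coeff t| ≤ n - 1 := by
    intro t
    rw [hr, abs_of_nonneg (Int.emod_nonneg _ hn'.ne')]
    linarith [Int.emod_lt_of_pos (q.coeff t) hn']
  have hr_deg : r.natDegree ≤ q.natDegree :=
    natDegree_le_iff_coeff_eq_zero.mpr fun t ht => by
      rw [hr, coeff_eq_zero_of_natDegree_lt ht, Int.zero_emod]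
  refine ⟨p, ⟨r, by rw [← hp]; ring⟩, fun t => ?_,
    natDegree_le_iff_coeff_eq_zero.mpr fun t ht => ?_⟩
  · have hrm := abs_coeff_mul_le hr_abs hm t
    have : n * |p.coeff t| < n * (M * (m.natDegree + 1)) :=
      calc (n : ℤ) * |p.coeff t| = |f.coeff t - (r * m).coeff t| := by
            rw [← hcoeff, abs_mul, abs_of_pos hn']
        _ ≤ 1 + (m.natDegree + 1) * ((n - 1) * M) := (abs_sub _ _).trans (add_le_add (hf t) hrm)
        _ < n * (M * (m.natDegree + 1)) := by linear_combination hM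
    exact lt_of_mul_lt_mul_left this hn'.le
  · have hf0 : f.coeff t = 0 := coeff_eq_zero_of_natDegree_lt (lt_of_le_of_lt (le_max_left _ _) ht)
    have hrm0 : (r * m).coeff t = 0 := coeff_eq_zero_of_natDegree_lt <| natDegree_mul_le.trans_lt
      (by have := le_max_right f.natDegree (q.natDegree + m.natDegree); omega)
    simpa [hf0, hrm0, hn.ne'] using hcoeff t

theorem abs_coeff_X_pow_sub_X_pow_le_one (a b t : ℕ) :
    |((X : ℤ[X]) ^ a - X ^ b).coeff t| ≤ 1 := by
  rw [coeff_sub, coeff_X_pow, coeff_X_pow]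
  split_ifs <;> simp

theorem abs_coeff_le_sup' (m : ℤ[X]) (t : ℕ) :
    |m.coeff t| ≤ (Finset.range (m.natDegree + 1)).sup' (by simp) fun i => |m.coeff i| := by
  by_cases ht : t ≤ m.natDegree
  · exact Finset.le_sup' (fun i => |m.coeff i|) (Finset.mem_range.mpr (Nat.lt_succ_of_le ht))
  · rw [coeff_eq_zero_of_natDegree_lt (not_le.mp ht), abs_zero]
    exact Finset.le_sup'_of_le _ (Finset.mem_range.mpr m.natDegree.succ_pos) (abs_nonneg _)

end Polynomial

theorem stmt_12 (β : ℂ) (m : Polynomial ℤ) (hm : IsMinPolyZ β m) (M : ℤ)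
    (hM : M = (Finset.range (m.natDegree + 1)).sup' (by simp) fun i => |m.coeff i|)
    (n : ℕ) (hn : 0 < n) :
    ∃ (i j : ℤ) (mm : ℕ) (d : ℕ → ℤ), j < i ∧ (mm : ℤ) < 2 * (i - j) ∧
      (∀ k ≤ mm, |d k| < M * (m.natDegree + 1)) ∧
      β ^ i - β ^ j = (n : ℂ) * ∑ k ∈ Finset.range (mm + 1), (d k : ℂ) * β ^ k := by
  obtain ⟨hm0, hprim, -, hroot, -⟩ := hm
  have hcoeff : ∀ t, |m.coeff t| ≤ M := hM ▸ m.abs_coeff_le_sup'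
  have hM1 : 1 ≤ M := (Int.one_le_abs (leadingCoeff_ne_zero.mpr hm0)).trans (hcoeff _)
  have hdeg : 0 < m.natDegree :=
    natDegree_pos_of_aeval_root hm0 hroot fun x hx => by simpa using hx
  obtain ⟨j, l, q, hjl, hql, hdvd⟩ :=
    hprim.exists_X_pow_add_sub_X_pow_sub_mul_dvd hn m.natDegree
  obtain ⟨p, ⟨r, hr⟩, hp, hpdeg⟩ := exists_dvd_sub_C_mul_abs_coeff_lt hn hcoeff
    (by nlinarith) (abs_coeff_X_pow_sub_X_pow_le_one _ _) hdvd
  have hfdeg : ((X : ℤ[X]) ^ (j + l) - X ^ j).natDegree < 2 * l :=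
    (natDegree_sub_le_of_le (natDegree_X_pow_le _) (natDegree_X_pow_le _)).trans_lt (by omega)
  have hpdeg' : p.natDegree < 2 * l := hpdeg.trans_lt (max_lt hfdeg hql)
  refine ⟨(j + l : ℕ), j, 2 * l - 1, p.coeff, by omega, by push_cast; omega,
    fun k _ => hp k, ?_⟩
  have hβ := congrArg (aeval β) hr
  simp only [map_sub, map_mul, map_pow, aeval_X, hroot, zero_mul,
    eq_intCast, Int.cast_natCast] at hβ
  rw [Nat.sub_add_cancel (by omega), zpow_natCast, zpow_natCast, sub_eq_zero.mp hβ,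
    aeval_eq_sum_range' hpdeg']
  simp [zsmul_eq_mul]
end

section
/- Let β ∈ ℂ with |β| > 1 and suppose β^i - β^j = n·z where i > j ≥ 0 are integers, n a positive integer, and z = Σ_{k=0}^m d_k β^k with integers d_k satisfying |d_k| ≤ C and m < 2(i-j). Then 1/n = Σ_{k ≥ -L} a_k β^{-k} for some eventually periodic integer digit sequence (a_k) with |a_k| ≤ 2C for all k. -/
/-!
Since `β ^ i - β ^ j = n z`, we have `1 / n = z β⁻ⁱ / (1 - β^{-(i-j)}) = ∑ₜ z β^{-i-t(i-j)}`.
Expanding `z = ∑ₖ dₖ βᵏ`, the `t`-th term places `dₖ` at position `i + t(i-j) - k`, so the digit at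
position `K` collects those `dₖ` with `K ≡ i - k [ZMOD i - j]` and `K ≥ i - k`. Since `m < 2(i-j)`,
at most two indices `k ≤ m` share a residue modulo `i - j`, whence `|aₖ| ≤ 2C`.
-/

open Finset

lemma Finset.card_le_two_of_modEq {S : Finset ℕ} {q : ℕ} (hlt : ∀ k ∈ S, k < 2 * q)
    (hmod : ∀ k ∈ S, ∀ l ∈ S, k ≡ l [MOD q]) : #S ≤ 2 := by
  have hmaps : Set.MapsTo (· / q) (S : Set ℕ) (range 2 : Finset ℕ) := fun k hk =>
    mem_range.2 (Nat.div_lt_of_lt_mul (by linarith [hlt k hk]))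
  have hinj : Set.InjOn (· / q) (S : Set ℕ) := fun k hk l hl (hkl : k / q = l / q) => by
    rw [← Nat.div_add_mod k q, ← Nat.div_add_mod l q, hkl, hmod k hk l hl]
  simpa using card_le_card_of_injOn _ hmaps hinj

section GeometricProgression

variable {𝕜 : Type*} [NormedField 𝕜] {β : 𝕜} {q : ℕ}

lemma hasSum_zpow_neg_arithProgression (hβ : 1 < ‖β‖) (hq : 0 < q) (r : ℤ) :
    HasSum (fun K : ℤ => if r ≤ K ∧ (q : ℤ) ∣ K - r then β ^ (-K) else 0)
      (β ^ (-r) * (1 - β ^ (-(q : ℤ)))⁻¹) := by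
  have hβ0 : β ≠ 0 := norm_pos_iff.mp (one_pos.trans hβ)
  have hw : ‖β ^ (-(q : ℤ))‖ < 1 := by
    rw [norm_zpow, zpow_neg, zpow_natCast]
    exact inv_lt_one_of_one_lt₀ (one_lt_pow₀ hβ hq.ne')
  set e : ℕ → ℤ := fun t => r + t * q
  have he : Function.Injective e := fun t u h => by
    have : (t : ℤ) * q = u * q := by simpa [e] using h
    exact_mod_cast mul_right_cancel₀ (by exact_mod_cast hq.ne') this
  have hsupp : ∀ K ∉ Set.range e, (if r ≤ K ∧ (q : ℤ) ∣ K - r then β ^ (-K) else 0) = 0 := by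
    intro K hK
    rw [if_neg]
    rintro ⟨hrK, c, hc⟩
    lift c to ℕ using nonneg_of_mul_nonneg_right (by omega) (by omega : (0 : ℤ) < q)
    exact hK ⟨c, by simp only [e]; linarith⟩
  have hterm : (fun K : ℤ => if r ≤ K ∧ (q : ℤ) ∣ K - r then β ^ (-K) else 0) ∘ e =
      fun t => β ^ (-r) * (β ^ (-(q : ℤ))) ^ t := by
    funext t
    simp only [Function.comp_apply, e, le_add_iff_nonneg_right, add_sub_cancel_left]
    rw [if_pos ⟨by positivity, dvd_mul_left _ _⟩, ← zpow_natCast, ← zpow_mul, ← zpow_add₀ hβ0]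
    ring_nf
  rw [← he.hasSum_iff hsupp, hterm]
  exact (hasSum_geometric_of_norm_lt_one hw).mul_left _

end GeometricProgression

/-- The coefficient of `β ^ (-K)` in `∑ t : ℕ, ∑ k ≤ m, d k * β ^ (k - s - t q)`, the expansion of
`(∑ k ≤ m, d k * β ^ k) * β ^ (-s) / (1 - β ^ (-q))`. -/
def periodicDigits (d : ℕ → ℤ) (m q : ℕ) (s K : ℤ) : ℤ :=
  ∑ k ∈ range (m + 1), if s - k ≤ K ∧ (q : ℤ) ∣ K - (s - k) then d k else 0

namespace periodicDigits

variable {d : ℕ → ℤ} {m q : ℕ} {s K : ℤ}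

lemma eq_zero_of_lt (hK : K < s - m) : periodicDigits d m q s K = 0 :=
  sum_eq_zero fun k hk => if_neg fun h => by simp only [mem_range] at hk; omega

lemma add_period (hK : s ≤ K) : periodicDigits d m q s (K + q) = periodicDigits d m q s K := by
  refine sum_congr rfl fun k _ => if_congr ?_ rfl rfl
  have : K + q - (s - k) = K - (s - k) + q := by ring
  rw [this, dvd_add_left (dvd_refl _)]
  exact and_congr_left fun _ => by omega

lemma abs_le (hm : m < 2 * q) {C : ℤ} (hd : ∀ k ≤ m, |d k| ≤ C) :
    |periodicDigits d m q s K| ≤ 2 * C := by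
  set S := (range (m + 1)).filter fun k : ℕ => s - k ≤ K ∧ (q : ℤ) ∣ K - (s - k)
  have hS : ∀ k ∈ S, k ≤ m ∧ (q : ℤ) ∣ K - (s - k) := fun k hk => by
    simp only [S, mem_filter, mem_range] at hk
    exact ⟨by omega, hk.2.2⟩
  have hcard : #S ≤ 2 := by
    refine card_le_two_of_modEq (q := q) (fun k hk => by have := (hS k hk).1; omega)
      fun k hk l hl => ?_
    rw [← Int.natCast_modEq_iff, Int.modEq_iff_dvd]
    have := dvd_sub (hS l hl).2 (hS k hk).2
    rwa [show K - (s - l) - (K - (s - k)) = (l : ℤ) - k by ring] at this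
  have hC : 0 ≤ C := (abs_nonneg _).trans (hd 0 m.zero_le)
  calc |periodicDigits d m q s K| = |∑ k ∈ S, d k| := by rw [periodicDigits, sum_filter]
    _ ≤ ∑ k ∈ S, |d k| := abs_sum_le_sum_abs _ _
    _ ≤ ∑ _k ∈ S, C := sum_le_sum fun k hk => hd k (hS k hk).1
    _ = #S * C := by rw [sum_const, nsmul_eq_mul]
    _ ≤ 2 * C := mul_le_mul_of_nonneg_right (by exact_mod_cast hcard) hC

lemma hasSum {𝕜 : Type*} [NormedField 𝕜] {β : 𝕜} (hβ : 1 < ‖β‖) (hq : 0 < q) :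
    HasSum (fun K : ℤ => (periodicDigits d m q s K : 𝕜) * β ^ (-K))
      ((∑ k ∈ range (m + 1), (d k : 𝕜) * β ^ k) * β ^ (-s) * (1 - β ^ (-(q : ℤ)))⁻¹) := by
  have hβ0 : β ≠ 0 := norm_pos_iff.mp (one_pos.trans hβ)
  have hk := fun k : ℕ => (hasSum_zpow_neg_arithProgression hβ hq (s - k)).mul_left (d k : 𝕜)
  have hterm : (fun K : ℤ => (periodicDigits d m q s K : 𝕜) * β ^ (-K)) = fun K =>
      ∑ k ∈ range (m + 1), (d k : 𝕜) * if s - k ≤ K ∧ (q : ℤ) ∣ K - (s - k) then β ^ (-K) else 0 := by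
    funext K
    simp only [periodicDigits, Int.cast_sum, sum_mul]
    refine sum_congr rfl fun k _ => ?_
    split_ifs <;> simp
  have hval : (∑ k ∈ range (m + 1), (d k : 𝕜) * β ^ k) * β ^ (-s) * (1 - β ^ (-(q : ℤ)))⁻¹ =
      ∑ k ∈ range (m + 1), (d k : 𝕜) * (β ^ (-(s - k)) * (1 - β ^ (-(q : ℤ)))⁻¹) := by
    rw [sum_mul, sum_mul]
    refine sum_congr rfl fun k _ => ?_
    rw [neg_sub, zpow_sub₀ hβ0, zpow_neg, zpow_natCast]
    ring
  rw [hterm, hval]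
  exact hasSum_sum fun k _ => hk k

end periodicDigits

theorem stmt_13 (β : ℂ) (hβ : 1 < ‖β‖) (n : ℕ) (hn : 0 < n)
    (i j : ℕ) (hij : j < i) (m : ℕ) (hm : m < 2 * (i - j)) (C : ℤ)
    (d : ℕ → ℤ) (hd : ∀ k ≤ m, |d k| ≤ C)
    (heq : β ^ i - β ^ j = (n : ℂ) * ∑ k ∈ Finset.range (m + 1), (d k : ℂ) * β ^ k) :
    ∃ (L : ℤ) (a : ℤ → ℤ), (∀ k : ℤ, k < -L → a k = 0) ∧ (∀ k, |a k| ≤ 2 * C) ∧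
      (∃ (N : ℤ) (p : ℕ), 0 < p ∧ ∀ k : ℤ, N ≤ k → a (k + p) = a k) ∧
      (1 : ℂ) / n = ∑' k : ℤ, (a k : ℂ) * β ^ (-k) := by
  have hq : 0 < i - j := Nat.sub_pos_of_lt hij
  refine ⟨m - i, periodicDigits d m (i - j) i,
    fun K hK => periodicDigits.eq_zero_of_lt (by omega), fun K => periodicDigits.abs_le hm hd,
    ⟨i, i - j, hq, fun K hK => periodicDigits.add_period hK⟩, ?_⟩
  have hw : β ^ (i - j) - 1 ≠ 0 := sub_ne_zero.2 fun h =>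
    (one_lt_pow₀ hβ hq.ne').ne' (by rw [← norm_pow, h, norm_one])
  have hβ0 : β ≠ 0 := norm_pos_iff.mp (one_pos.trans hβ)
  have hn0 : (n : ℂ) ≠ 0 := by exact_mod_cast hn.ne'
  rw [(periodicDigits.hasSum hβ hq).tsum_eq, zpow_neg, zpow_natCast, zpow_neg, zpow_natCast]
  field_simp
  rw [← heq, ← Nat.add_sub_cancel' hij.le, pow_add, Nat.add_sub_cancel_left]
  ring
end

section
/- Let β be an algebraic number such that for some i > j, β^i - β^j ∈ nℤ[β] holds for n = n₁ and (with possibly different exponents) for n = n₂, where gcd(n₁, n₂) = 1. Then there exist i' > j' with β^{i'} - β^{j'} ∈ n₁n₂ℤ[β]. -/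
/-! Write `β ^ i - β ^ j = β ^ j * (β ^ d - 1)` with `d = i - j > 0`. Since `β ^ d - 1` divides
`β ^ (d * m) - 1` in `ℤ[β]` and `β ∈ ℤ[β]`, the gap `d` may be replaced by any multiple and `j` by
any larger exponent. So both hypotheses hold with the common gap `d₁ * d₂` and the common exponent
`max j₁ j₂`, and a Bézout relation `a n₁ + b n₂ = 1` gives divisibility by `n₁ n₂`. -/

open Finset

section

variable {K σ : Type*} [Field K] [SetLike σ K]

/-- `x ∈ n S` in the paper's notation. -/
def DvdIn (S : σ) (n x : K) : Prop := ∃ z ∈ S, x = n * z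

variable {S : σ} {β n : K}

theorem zpow_sub_zpow_eq (hβ0 : β ≠ 0) {i j : ℤ} (hji : j ≤ i) :
    β ^ i - β ^ j = β ^ j * (β ^ (i - j).toNat - 1) := by
  rw [mul_sub, mul_one, ← zpow_natCast, ← zpow_add₀ hβ0, Int.toNat_of_nonneg (by omega),
    add_sub_cancel]

theorem exists_dvdIn_zpow_sub_zpow_iff (hβ0 : β ≠ 0) :
    (∃ i j : ℤ, j < i ∧ DvdIn S n (β ^ i - β ^ j)) ↔
      ∃ j : ℤ, ∃ d : ℕ, 0 < d ∧ DvdIn S n (β ^ j * (β ^ d - 1)) := by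
  constructor
  · rintro ⟨i, j, hji, h⟩
    exact ⟨j, (i - j).toNat, by omega, zpow_sub_zpow_eq hβ0 hji.le ▸ h⟩
  · rintro ⟨j, d, hd, h⟩
    refine ⟨j + d, j, by omega, ?_⟩
    simpa [zpow_sub_zpow_eq hβ0 (show j ≤ j + d by omega)] using h

variable [SubringClass σ K]

namespace DvdIn

variable {x s : K}

theorem mul_left (hs : s ∈ S) (h : DvdIn S n x) : DvdIn S n (s * x) := by
  obtain ⟨z, hz, rfl⟩ := h
  exact ⟨s * z, mul_mem hs hz, by ring⟩

theorem mul_right (hs : s ∈ S) (h : DvdIn S n x) : DvdIn S n (x * s) :=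
  mul_comm s x ▸ h.mul_left hs

theorem mul_of_add_eq_one {m a b : K} (ha : a ∈ S) (hb : b ∈ S) (hab : a * m + b * n = 1)
    (hm : DvdIn S m x) (hn : DvdIn S n x) : DvdIn S (m * n) x := by
  obtain ⟨z, hz, hxz⟩ := hm
  obtain ⟨w, hw, hxw⟩ := hn
  refine ⟨a * w + b * z, add_mem (mul_mem ha hw) (mul_mem hb hz), ?_⟩
  calc x = a * m * x + b * n * x := by rw [← add_mul, hab, one_mul]
    _ = a * m * (n * w) + b * n * (m * z) := by nth_rw 1 [hxw]; rw [← hxz]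
    _ = m * n * (a * w + b * z) := by ring

theorem natCast_mul_of_coprime {m k : ℕ} (hmk : Nat.Coprime m k)
    (hm : DvdIn S (m : K) x) (hk : DvdIn S (k : K) x) : DvdIn S ((m : K) * k) x := by
  obtain ⟨a, b, hab⟩ := hmk.isCoprime
  refine mul_of_add_eq_one (intCast_mem S a) (intCast_mem S b) ?_ hm hk
  exact_mod_cast congrArg (Int.cast : ℤ → K) hab

variable {j : ℤ} {d : ℕ}

theorem zpow_mul_pow_mul_sub_one (hβ : β ∈ S) (h : DvdIn S n (β ^ j * (β ^ d - 1))) (m : ℕ) :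
    DvdIn S n (β ^ j * (β ^ (d * m) - 1)) := by
  rw [pow_mul, ← geom_sum_mul, mul_comm _ (β ^ d - 1), ← mul_assoc]
  exact h.mul_right (sum_mem fun k _ => pow_mem (pow_mem hβ d) k)

theorem zpow_mul_of_le (hβ : β ∈ S) (hβ0 : β ≠ 0) {j' : ℤ} (hjj' : j ≤ j')
    (h : DvdIn S n (β ^ j * x)) : DvdIn S n (β ^ j' * x) := by
  have hshift : β ^ j' = β ^ (j' - j).toNat * β ^ j := by
    rw [← zpow_natCast, ← zpow_add₀ hβ0, Int.toNat_of_nonneg (by omega), sub_add_cancel]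
  rw [hshift, mul_assoc]
  exact h.mul_left (pow_mem hβ _)

end DvdIn

theorem DvdIn.zpow_mul_pow_sub_one_of_coprime (hβ : β ∈ S) (hβ0 : β ≠ 0) {m k : ℕ}
    (hmk : Nat.Coprime m k) {j₁ j₂ : ℤ} {d₁ d₂ : ℕ}
    (h₁ : DvdIn S (m : K) (β ^ j₁ * (β ^ d₁ - 1))) (h₂ : DvdIn S (k : K) (β ^ j₂ * (β ^ d₂ - 1))) :
    DvdIn S ((m : K) * k) (β ^ max j₁ j₂ * (β ^ (d₁ * d₂) - 1)) := by
  have h₁' := (h₁.zpow_mul_pow_mul_sub_one hβ d₂).zpow_mul_of_le hβ hβ0 (le_max_left j₁ j₂)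
  have h₂' := (h₂.zpow_mul_pow_mul_sub_one hβ d₁).zpow_mul_of_le hβ hβ0 (le_max_right j₁ j₂)
  rw [mul_comm d₂ d₁] at h₂'
  exact DvdIn.natCast_mul_of_coprime hmk h₁' h₂'

end

theorem stmt_17_general (β : ℂ) (hβ0 : β ≠ 0) (n₁ n₂ : ℕ)
    (hcop : Nat.Coprime n₁ n₂)
    (h₁ : ∃ i j : ℤ, j < i ∧ ∃ z ∈ Algebra.adjoin ℤ {β}, β ^ i - β ^ j = (n₁ : ℂ) * z)
    (h₂ : ∃ i j : ℤ, j < i ∧ ∃ z ∈ Algebra.adjoin ℤ {β}, β ^ i - β ^ j = (n₂ : ℂ) * z) :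
    ∃ i' j' : ℤ, j' < i' ∧
      ∃ z ∈ Algebra.adjoin ℤ {β}, β ^ i' - β ^ j' = ((n₁ : ℂ) * n₂) * z := by
  have hβ : β ∈ Algebra.adjoin ℤ {β} := Algebra.self_mem_adjoin_singleton ℤ β
  obtain ⟨j₁, d₁, hd₁, g₁⟩ := (exists_dvdIn_zpow_sub_zpow_iff hβ0).mp h₁
  obtain ⟨j₂, d₂, hd₂, g₂⟩ := (exists_dvdIn_zpow_sub_zpow_iff hβ0).mp h₂
  exact (exists_dvdIn_zpow_sub_zpow_iff hβ0).mpr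
    ⟨_, _, Nat.mul_pos hd₁ hd₂, g₁.zpow_mul_pow_sub_one_of_coprime hβ hβ0 hcop g₂⟩

theorem stmt_17 (β : ℂ) (hβ0 : β ≠ 0) (hβ : IsAlgebraic ℚ β) (n₁ n₂ : ℕ)
    (hn₁ : 0 < n₁) (hn₂ : 0 < n₂) (hcop : Nat.Coprime n₁ n₂)
    (h₁ : ∃ i j : ℤ, j < i ∧ ∃ z ∈ Algebra.adjoin ℤ {β}, β ^ i - β ^ j = (n₁ : ℂ) * z)
    (h₂ : ∃ i j : ℤ, j < i ∧ ∃ z ∈ Algebra.adjoin ℤ {β}, β ^ i - β ^ j = (n₂ : ℂ) * z) :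
    ∃ i' j' : ℤ, j' < i' ∧
      ∃ z ∈ Algebra.adjoin ℤ {β}, β ^ i' - β ^ j' = ((n₁ : ℂ) * n₂) * z :=
  stmt_17_general β hβ0 n₁ n₂ hcop h₁ h₂
end

section
/- Let β be an algebraic number whose minimal polynomial over ℤ has leading coefficient c divisible by a prime power p^ℓ, and write m_k(x) for the minimal polynomial of β^k with leading coefficient c_k. Suppose k is such that p^ℓ divides c_k, and suppose every root γ of the polynomial m_k(x) - c_k x^{deg m_k} of degree less than deg m_k satisfies: there exist i > j and q(x) ∈ ℤ[x] with x^i - x^j - p^ℓ q(x) divisible by the minimal polynomial of γ. Then there exist I > J with β^I - β^J ∈ p^ℓ ℤ[β^k] ⊆ p^ℓ ℤ[β]. -/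
/-!
Write `r = m_k - c_k x^d` and `n = p^ℓ`. Each irreducible factor of the primitive part of `r` shares
a root with a minimal polynomial dividing some `x^i - x^j - n q(x)`, so by Gauss's lemma it divides
such a polynomial too. These congruences multiply: if both have period `U`, then with `D = x^U - 1`
the product of the factors divides `x^a D^2` modulo `n`, and `D^2 ∣ x^{UN} - 1 - N D` for `N = |n|`.
Finally `m_k ≡ r = cont(r) · prim(r)` modulo `n`, where `cont(r)` is prime to `n` because `m_k` is
primitive and `n ∣ c_k`; so `m_k` divides some `x^i - x^j - n q(x)`, which vanishes at `β^k`.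
-/

open Polynomial

/-- `X` is eventually periodic in `ℤ[X] ⧸ (g, n)`. -/
def XPowCongr (n : ℤ) (g : ℤ[X]) : Prop :=
  ∃ (i j : ℕ) (q : ℤ[X]), j < i ∧ g ∣ X ^ i - X ^ j - C n * q

theorem isCoprime_content_eraseLead {n : ℤ} {f : ℤ[X]} (hf : f.IsPrimitive)
    (hn : n ∣ f.leadingCoeff) : IsCoprime n f.eraseLead.content := by
  rw [← isRelPrime_iff_isCoprime]
  intro d hdn hdc
  apply hf
  rw [← f.eraseLead_add_C_mul_X_pow]
  exact dvd_add ((C_dvd_iff_dvd_coeff _ _).mpr fun k => hdc.trans (content_dvd_coeff k))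
    (dvd_mul_of_dvd_left (map_dvd C (hdn.trans hn)) _)

namespace XPowCongr

variable {n : ℤ}

theorem of_isUnit {g : ℤ[X]} (hg : IsUnit g) : XPowCongr n g :=
  ⟨1, 0, 0, zero_lt_one, hg.dvd⟩

theorem exists_dvd_pow_mul_sub_one {g : ℤ[X]} (h : XPowCongr n g) :
    ∃ (j u : ℕ), 0 < u ∧ ∀ m : ℕ, ∃ q : ℤ[X], g ∣ X ^ j * (X ^ (u * m) - 1) - C n * q := by
  obtain ⟨i, j, q, hji, F, hF⟩ := h
  obtain ⟨u, rfl⟩ := Nat.exists_eq_add_of_lt hji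
  refine ⟨j, u + 1, u.succ_pos, fun m => ?_⟩
  obtain ⟨G, hG⟩ : X ^ (u + 1) - 1 ∣ (X ^ (u + 1)) ^ m - (1 : ℤ[X]) := by
    simpa using sub_dvd_pow_sub_pow (X ^ (u + 1) : ℤ[X]) 1 m
  exact ⟨G * q, G * F, by rw [pow_mul]; linear_combination G * hF + X ^ j * hG⟩

theorem mul (hn : n ≠ 0) {f g : ℤ[X]} (hf : XPowCongr n f) (hg : XPowCongr n g) :
    XPowCongr n (f * g) := by
  obtain ⟨j₁, u₁, hu₁, hf⟩ := hf.exists_dvd_pow_mul_sub_one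
  obtain ⟨j₂, u₂, hu₂, hg⟩ := hg.exists_dvd_pow_mul_sub_one
  obtain ⟨q₁, F, hF⟩ := hf u₂
  obtain ⟨q₂, G, hG⟩ := hg u₁
  set U := u₁ * u₂
  set D : ℤ[X] := X ^ U - 1
  set N := n.natAbs
  obtain ⟨s, hs⟩ : n ∣ (N : ℤ) := Int.dvd_natAbs_self
  -- `(1 + D) ^ N ≡ 1 + N * D` modulo `D ^ 2`, and `n ∣ N`.
  obtain ⟨T, hT⟩ := sq_dvd_add_pow_sub_sub D 1 N
  refine ⟨j₁ + j₂ + U * N, j₁ + j₂,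
    T * (q₁ * X ^ j₂ * D + q₂ * X ^ j₁ * D - C n * q₁ * q₂) + C s * X ^ (j₁ + j₂) * D,
    ?_, F * G * T, ?_⟩
  · have : 0 < U * N := Nat.mul_pos (Nat.mul_pos hu₁ hu₂) (Int.natAbs_pos.mpr hn)
    omega
  · have hsC : (N : ℤ[X]) = C n * C s := by rw [← C_mul, ← hs]; simp
    rw [mul_comm u₂ u₁] at hG
    simp only [one_pow, add_sub_cancel, hsC, D] at hT
    have hfg : (X ^ j₁ * D - C n * q₁) * (X ^ j₂ * D - C n * q₂) = f * g * (F * G) := by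
      rw [hF, hG]; ring
    rw [pow_add, pow_mul]
    linear_combination (X : ℤ[X]) ^ (j₁ + j₂) * hT + T * hfg

theorem of_dvd_aeval_eq_zero {K : Type*} [Field K] [CharZero K] {f : ℤ[X]}
    (hf : f.IsPrimitive) (hirr : Irreducible f) {x : K} (hfx : aeval x f = 0)
    (hx : ∃ (i j : ℕ) (q : ℤ[X]), j < i ∧ aeval x (X ^ i - X ^ j - C n * q) = 0) :
    XPowCongr n f := by
  obtain ⟨i, j, q, hji, hq⟩ := hx
  refine ⟨i, j, q, hji, ?_⟩
  rw [IsPrimitive.Int.dvd_iff_map_cast_dvd_map_cast _ _ hf]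
  have hirr' := (IsPrimitive.Int.irreducible_iff_irreducible_map_cast hf).mp hirr
  refine (hirr'.dvd_iff_aeval_eq_zero (b := x) ?_).mp ?_
  · simpa [← algebraMap_int_eq, aeval_map_algebraMap] using hfx
  · simpa [← algebraMap_int_eq, aeval_map_algebraMap] using hq

theorem of_forall_aeval_eq_zero {K : Type*} [Field K] [CharZero K] [IsAlgClosed K]
    (hn : n ≠ 0) {g : ℤ[X]} (hg : g.IsPrimitive)
    (hroots : ∀ x : K, aeval x g = 0 →
      ∃ (i j : ℕ) (q : ℤ[X]), j < i ∧ aeval x (X ^ i - X ^ j - C n * q) = 0) :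
    XPowCongr n g := by
  induction g using WfDvdMonoid.induction_on_irreducible with
  | zero => exact absurd rfl hg.ne_zero
  | unit u hu => exact of_isUnit hu
  | mul g f _ hirr ih =>
    have hf : f.IsPrimitive := isPrimitive_of_dvd hg (dvd_mul_right f g)
    have hdeg : f.degree ≠ 0 := fun h => by
      rw [eq_C_of_degree_eq_zero h] at hf hirr
      exact hirr.not_isUnit (isUnit_C.mpr (hf _ dvd_rfl))
    obtain ⟨x, hx⟩ := IsAlgClosed.exists_aeval_eq_zero K f hdeg
    refine (of_dvd_aeval_eq_zero hf hirr hx (hroots x ?_)).mul hn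
      (ih (isPrimitive_of_dvd hg (dvd_mul_left g f)) fun y hy => hroots y ?_)
    · simp [hx]
    · simp [hy]

theorem of_eraseLead_primPart {f : ℤ[X]} (hf : f.IsPrimitive) (hn : n ∣ f.leadingCoeff)
    (h : XPowCongr n f.eraseLead.primPart) : XPowCongr n f := by
  obtain ⟨i, j, q, hji, H, hH⟩ := h
  obtain ⟨c, hc⟩ := hn
  obtain ⟨a, b, hab⟩ := isCoprime_content_eraseLead hf ⟨c, hc⟩
  refine ⟨i, j,
    C a * (X ^ i - X ^ j) + C b * (C f.eraseLead.content * q - C c * X ^ f.natDegree * H),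
    hji, C b * H, ?_⟩
  have habC : C a * C n + C b * C f.eraseLead.content = 1 := by
    rw [← C_mul, ← C_mul, ← C_add, hab, C_1]
  have hcC : C f.leadingCoeff = C n * C c := by rw [hc, C_mul]
  have hf' := f.eraseLead_add_C_mul_X_pow
  have hcont := f.eraseLead.eq_C_content_mul_primPart
  linear_combination -(X ^ i - X ^ j) * habC + C b * H * hf' - X ^ f.natDegree * C b * H * hcC
    - C b * H * hcont + C b * C f.eraseLead.content * hH

theorem exists_pow_sub_pow_eq_mul {A : Type*} [CommRing A] {f : ℤ[X]} (h : XPowCongr n f)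
    {y : A} (hy : aeval y f = 0) :
    ∃ i j : ℕ, j < i ∧ ∃ z ∈ Algebra.adjoin ℤ {y}, y ^ i - y ^ j = n * z := by
  obtain ⟨i, j, q, hji, F, hF⟩ := h
  refine ⟨i, j, hji, aeval y q, aeval_mem_adjoin_singleton ℤ y, ?_⟩
  have := congrArg (aeval y) hF
  simp only [map_sub, map_mul, map_pow, map_intCast, aeval_X, hy, zero_mul, eq_intCast] at this
  linear_combination this

end XPowCongr

theorem stmt_18_general (β : ℂ) (p : ℕ) (hp : p.Prime) (ℓ : ℕ)
    (k : ℕ) (hk : 1 ≤ k) (mk : Polynomial ℤ) (hmk : IsMinPolyZ (β ^ k) mk)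
    (hck : (p : ℤ) ^ ℓ ∣ mk.leadingCoeff)
    (hroots : ∀ γ : ℂ,
      Polynomial.aeval γ (mk - C mk.leadingCoeff * X ^ mk.natDegree) = 0 →
      ∃ (i j : ℕ) (q mγ : Polynomial ℤ), j < i ∧ IsMinPolyZ γ mγ ∧
        mγ ∣ X ^ i - X ^ j - C ((p : ℤ) ^ ℓ) * q) :
    ∃ I J : ℕ, J < I ∧
      ∃ z ∈ Algebra.adjoin ℤ {β ^ k}, β ^ I - β ^ J = ((p : ℂ) ^ ℓ) * z := by
  have hn : (p : ℤ) ^ ℓ ≠ 0 := pow_ne_zero _ (Int.natCast_ne_zero.mpr hp.ne_zero)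
  have hrootsPrimPart (γ : ℂ) (hγ : aeval γ mk.eraseLead.primPart = 0) :
      ∃ (i j : ℕ) (q : ℤ[X]), j < i ∧ aeval γ (X ^ i - X ^ j - C ((p : ℤ) ^ ℓ) * q) = 0 := by
    rw [self_sub_C_mul_X_pow] at hroots
    obtain ⟨i, j, q, mγ, hji, hmγ, F, hF⟩ :=
      hroots γ (aeval_eq_zero_of_dvd_aeval_eq_zero mk.eraseLead.primPart_dvd hγ)
    exact ⟨i, j, q, hji, by rw [hF, map_mul, hmγ.2.2.2.1, zero_mul]⟩
  have hcongr : XPowCongr ((p : ℤ) ^ ℓ) mk := .of_eraseLead_primPart hmk.2.1 hck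
    (.of_forall_aeval_eq_zero hn mk.eraseLead.isPrimitive_primPart hrootsPrimPart)
  obtain ⟨i, j, hji, z, hz, hzeq⟩ := hcongr.exists_pow_sub_pow_eq_mul hmk.2.2.2.1
  refine ⟨k * i, k * j, Nat.mul_lt_mul_of_pos_left hji hk, z, hz, ?_⟩
  simpa [pow_mul] using hzeq

theorem stmt_18 (β : ℂ) (p : ℕ) (hp : p.Prime) (ℓ : ℕ) (hℓ : 1 ≤ ℓ)
    (m : Polynomial ℤ) (hm : IsMinPolyZ β m) (hc : (p : ℤ) ^ ℓ ∣ m.leadingCoeff)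
    (k : ℕ) (hk : 1 ≤ k) (mk : Polynomial ℤ) (hmk : IsMinPolyZ (β ^ k) mk)
    (hck : (p : ℤ) ^ ℓ ∣ mk.leadingCoeff)
    (hroots : ∀ γ : ℂ,
      Polynomial.aeval γ (mk - C mk.leadingCoeff * X ^ mk.natDegree) = 0 →
      ∃ (i j : ℕ) (q mγ : Polynomial ℤ), j < i ∧ IsMinPolyZ γ mγ ∧
        mγ ∣ X ^ i - X ^ j - C ((p : ℤ) ^ ℓ) * q) :
    ∃ I J : ℕ, J < I ∧
      ∃ z ∈ Algebra.adjoin ℤ {β ^ k}, β ^ I - β ^ J = ((p : ℂ) ^ ℓ) * z :=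
  stmt_18_general β p hp ℓ k hk mk hmk hck hroots
end
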